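/- Suppose there is a subsequence (M_k) and 0 ≤ c < 1 with N^s_∞([0,1) ∩ G^{f,m}_{p̄}(M_k, ε)) < c/K^s for all k, where K is the distortion constant of f. Then for each cylinder C ⊆ [0,1) of generation n there exists K_C such that N^s_∞(C ∩ G^{f,m}_{p̄}(M_k, ε/2)) < c|C|^s for all k > K_C (any k with n/M_k < ε/2 suffices). -/

import Mathlib

open Set MeasureTheory Filter
open scoped ENNReal Classical

noncomputable section

/-- A similarity transformation of `ℝ`. -/
def IsSimilarity (f : ℝ → ℝ) : Prop := ∃ a b : ℝ, a ≠ 0 ∧ ∀ x, f x = a * x + b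

/-- Falconer's class `𝒢^s`: Gδ sets all of whose images under countably many
similarities intersect in a set of Hausdorff dimension at least `s`. -/
def falconerClass (s : ℝ) : Set (Set ℝ) :=
  {F | IsGδ F ∧ ∀ T : ℕ → ℝ → ℝ, (∀ i, IsSimilarity (T i)) →
    ENNReal.ofReal s ≤ dimH (⋂ i, T i '' F)}

/-- A probability vector indexed by a finite type. -/
def IsProbVector {ι : Type*} [Fintype ι] (p : ι → ℝ) : Prop :=
  (∀ i, 0 ≤ p i) ∧ ∑ i, p i = 1

/-- A dyadic half-open interval `[2^k m, 2^k (m+1))`. -/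
def IsDyadic (I : Set ℝ) : Prop :=
  ∃ (k m : ℤ), I = Ico ((2:ℝ) ^ k * m) ((2:ℝ) ^ k * (m + 1))

/-- The outer measure `M^s_∞` obtained from countable covers by dyadic intervals. -/
def dyadicMeasure (s : ℝ) (A : Set ℝ) : ℝ≥0∞ :=
  ⨅ (I : ℕ → Set ℝ) (_ : ∀ i, IsDyadic (I i)) (_ : A ⊆ ⋃ i, I i),
    ∑' i, volume (I i) ^ s

/-- Extension of a subset of `[0,1)` to `ℝ` by integer translations. -/
def periodize (A : Set ℝ) : Set ℝ := ⋃ k : ℤ, (fun x => x + (k : ℝ)) '' A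

/-- An expanding interval map on `[0,1)` with `g` full monotone branches,
generating a full shift on `g` symbols. -/
structure ExpandingFullShift where
  g : ℕ
  one_lt_g : 1 < g
  branch : Fin g → Set ℝ
  branch_Ico : ∀ i, ∃ a b : ℝ, a < b ∧ branch i = Ico a b
  branch_cover : (⋃ i, branch i) = Ico (0:ℝ) 1
  branch_disjoint : ∀ i j, i ≠ j → Disjoint (branch i) (branch j)
  f : ℝ → ℝ
  f_onto : ∀ i, f '' branch i = Ico (0:ℝ) 1
  f_mono : ∀ i, StrictMonoOn f (branch i) ∨ StrictAntiOn f (branch i)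
  f_expanding : ∀ i, ∀ x ∈ branch i, ∀ y ∈ branch i, |x - y| ≤ |f x - f y|

namespace ExpandingFullShift

variable (E : ExpandingFullShift)

/-- The symbol `0`. -/
def zeroSym : Fin E.g := ⟨0, Nat.lt_trans Nat.one_pos E.one_lt_g⟩

/-- The cylinder `C_{x₁ … x_n} ⊆ [0,1)` determined by a word `w`. -/
def cylinder (w : List (Fin E.g)) : Set ℝ :=
  {x ∈ Ico (0:ℝ) 1 | ∀ k (hk : k < w.length), E.f^[k] x ∈ E.branch (w.get ⟨k, hk⟩)}

/-- A cylinder in some interval `[k, k+1)`, `k ∈ ℤ` (periodic extension of the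
cylinder structure to `ℝ`). -/
def IsCylinderZ (C : Set ℝ) : Prop :=
  ∃ (w : List (Fin E.g)) (k : ℤ), C = (fun x => x + (k : ℝ)) '' E.cylinder w

/-- The outer measure `N^s_∞` obtained from countable covers by cylinders of `E`. -/
def cylMeasure (s : ℝ) (A : Set ℝ) : ℝ≥0∞ :=
  ⨅ (c : ℕ → List (Fin E.g)) (_ : A ⊆ ⋃ i, E.cylinder (c i)),
    ∑' i, volume (E.cylinder (c i)) ^ s

/-- The outer measure `N^s_∞` from covers by cylinders of the periodic extension. -/
def cylMeasureZ (s : ℝ) (A : Set ℝ) : ℝ≥0∞ :=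
  ⨅ (c : ℕ → Set ℝ) (_ : ∀ i, E.IsCylinderZ (c i)) (_ : A ⊆ ⋃ i, c i),
    ∑' i, volume (c i) ^ s

/-- The empirical frequency `τ^f_w(x,n)/(n-m)` of the word `w` (of length `m`)
in the first `n` symbols of the expansion of `x`. -/
def freq {m : ℕ} (w : Fin m → Fin E.g) (x : ℝ) (n : ℕ) : ℝ :=
  (((Finset.range (n - m)).filter
      (fun i => ∀ k : Fin m, E.f^[i + k] x ∈ E.branch (w k))).card : ℝ) / ((n - m : ℕ) : ℝ)

/-- `G^{f,m}_{p̄}`: the set of points whose length-`m` word frequencies converge to `p̄`. -/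
def Gset (m : ℕ) (p : (Fin m → Fin E.g) → ℝ) : Set ℝ :=
  {x ∈ Ico (0:ℝ) 1 | ∀ w : Fin m → Fin E.g,
    Tendsto (fun n => E.freq w x n) atTop (nhds (p w))}

/-- `G^{f,m}_{p̄}(n,ε)`: points whose empirical length-`m` word frequencies at time `n`
are within `ε` of `p̄` componentwise. -/
def GsetApprox (m : ℕ) (p : (Fin m → Fin E.g) → ℝ) (n : ℕ) (ε : ℝ) : Set ℝ :=
  {x ∈ Ico (0:ℝ) 1 | ∀ w : Fin m → Fin E.g, |E.freq w x n - p w| < ε}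

/-- `p̄ ∈ A^{f,m}(x)`: the vector `p̄` is an accumulation point of the empirical
frequency vectors of `x` as `n → ∞`. -/
def IsFreqAccum (m : ℕ) (p : (Fin m → Fin E.g) → ℝ) (x : ℝ) : Prop :=
  MapClusterPt p atTop (fun n => fun w => E.freq w x n)

/-- `x` is `m`-normal to `f`: every length-`m` word occurs with frequency equal to
the length of the corresponding cylinder. -/
def IsNormal (m : ℕ) (x : ℝ) : Prop :=
  ∀ w : Fin m → Fin E.g,
    Tendsto (fun n => E.freq w x n) atTop (nhds (volume (E.cylinder (List.ofFn w))).toReal)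

/-- Bounded distortion with constant `K`:
`|C_u||C_v|/K ≤ |C_{uv}| ≤ K |C_u||C_v|` for all words `u, v`. -/
def HasBoundedDistortion (K : ℝ) : Prop :=
  ∀ u v : List (Fin E.g),
    volume (E.cylinder (u ++ v)) ≤
      ENNReal.ofReal K * (volume (E.cylinder u) * volume (E.cylinder v)) ∧
    volume (E.cylinder u) * volume (E.cylinder v) ≤
      ENNReal.ofReal K * volume (E.cylinder (u ++ v))

/-- Condition (ii): for each `m` there is `p̄` with `dim_H G^{f,m}_{p̄} = 1`, and for
each word `w` of length `m` there are vectors `q̄` with `q_w ≠ p_w` whose `G`-set has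
Hausdorff dimension arbitrarily close to `1`. -/
def CondII : Prop :=
  ∀ m : ℕ, 0 < m → ∃ p : (Fin m → Fin E.g) → ℝ, IsProbVector p ∧ dimH (E.Gset m p) = 1 ∧
    ∀ w : Fin m → Fin E.g, ∀ t : ℝ≥0∞, t < 1 → ∃ q : (Fin m → Fin E.g) → ℝ,
      IsProbVector q ∧ q w ≠ p w ∧ t ≤ dimH (E.Gset m q)

end ExpandingFullShift

/-! A point of `C_w` whose length-`m` frequencies at time `N` are `ε/2`-close to `p̄` is mapped
by `f^{|w|}` to a point whose frequencies are `ε`-close, since dropping the first `|w|` symbols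
changes every occurrence count by at most `|w|`, which is at most `(ε/2)(N - m)` for large `N`.
Hence `C_w ∩ G(N, ε/2)` lies in the pull-back of `G(N, ε)` into `C_w`, and by bounded distortion
prefixing `w` to a cylinder cover of `G(N, ε)` costs at most a factor `(K |C_w|)^s`. -/

lemma Nat.abs_count_add_sub_count_le (q : ℕ → Prop) [DecidablePred q] (n D : ℕ) :
    |(Nat.count (fun i => q (n + i)) D : ℝ) - Nat.count q D| ≤ n := by
  have hnD := Nat.count_add q n D
  have hDn := Nat.count_add q D n
  have hqn : Nat.count q n ≤ n := Nat.count_le q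
  have hqDn : Nat.count (fun k => q (D + k)) n ≤ n := Nat.count_le _
  rw [add_comm D n] at hDn
  rw [abs_sub_le_iff, sub_le_iff_le_add, sub_le_iff_le_add]
  constructor <;> norm_cast <;> omega

namespace ExpandingFullShift

variable (E : ExpandingFullShift)

lemma branch_subset_Ico (i : Fin E.g) : E.branch i ⊆ Ico 0 1 := by
  rw [← E.branch_cover]
  exact subset_iUnion _ i

lemma f_mem_Ico {i : Fin E.g} {x : ℝ} (hx : x ∈ E.branch i) : E.f x ∈ Ico 0 1 := by
  rw [← E.f_onto i]
  exact mem_image_of_mem _ hx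

lemma cylinder_subset_Ico (w : List (Fin E.g)) : E.cylinder w ⊆ Ico 0 1 := fun _ hx => hx.1

lemma cylinder_nil : E.cylinder [] = Ico 0 1 := by
  ext x
  simp [cylinder]

lemma cylinder_cons (i : Fin E.g) (w : List (Fin E.g)) :
    E.cylinder (i :: w) = E.branch i ∩ E.f ⁻¹' E.cylinder w := by
  ext x
  simp only [cylinder, mem_ofPred_eq, mem_inter_iff, mem_preimage, List.length_cons,
    Nat.forall_lt_succ_left', Function.iterate_zero_apply, Function.iterate_succ_apply,
    List.get_eq_getElem, List.getElem_cons_zero, List.getElem_cons_succ]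
  exact ⟨fun ⟨_, hi, hw⟩ => ⟨hi, E.f_mem_Ico hi, hw⟩,
    fun ⟨hi, _, hw⟩ => ⟨E.branch_subset_Ico i hi, hi, hw⟩⟩

lemma cylinder_append (w v : List (Fin E.g)) :
    E.cylinder (w ++ v) = E.cylinder w ∩ E.f^[w.length] ⁻¹' E.cylinder v := by
  induction w with
  | nil => simp [cylinder_nil, inter_eq_right.2 (E.cylinder_subset_Ico v)]
  | cons i w ih =>
    simp only [List.cons_append, cylinder_cons, ih, preimage_inter, List.length_cons,
      Function.iterate_succ, preimage_comp, inter_assoc]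

lemma mapsTo_iterate_length_cylinder (w : List (Fin E.g)) :
    MapsTo E.f^[w.length] (E.cylinder w) (Ico 0 1) := by
  intro x hx
  rw [← List.append_nil w, cylinder_append, cylinder_nil] at hx
  exact hx.2

lemma image_cylinder_cons (i : Fin E.g) (w : List (Fin E.g)) :
    E.f '' E.cylinder (i :: w) = E.cylinder w := by
  rw [cylinder_cons, image_inter_preimage, E.f_onto, inter_eq_right.2 (E.cylinder_subset_Ico w)]

lemma cylinder_infinite (w : List (Fin E.g)) : (E.cylinder w).Infinite := by
  induction w with
  | nil => exact E.cylinder_nil ▸ Ico_infinite zero_lt_one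
  | cons i w ih => exact Infinite.of_image E.f (E.image_cylinder_cons i w ▸ ih)

lemma ordConnected_cylinder (w : List (Fin E.g)) : (E.cylinder w).OrdConnected := by
  induction w with
  | nil => exact E.cylinder_nil ▸ ordConnected_Ico
  | cons i w ih =>
    refine ⟨fun x hx y hy z hz => ?_⟩
    rw [cylinder_cons] at hx hy ⊢
    obtain ⟨a, b, -, hab⟩ := E.branch_Ico i
    have hzi : z ∈ E.branch i := hab ▸ ordConnected_Ico.out (hab ▸ hx.1) (hab ▸ hy.1) hz
    refine ⟨hzi, ?_⟩
    rcases E.f_mono i with hmono | hanti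
    · exact ih.out hx.2 hy.2
        ⟨hmono.monotoneOn hx.1 hzi hz.1, hmono.monotoneOn hzi hy.1 hz.2⟩
    · exact ih.out hy.2 hx.2
        ⟨hanti.antitoneOn hzi hy.1 hz.2, hanti.antitoneOn hx.1 hzi hz.1⟩

lemma volume_cylinder_pos (w : List (Fin E.g)) : 0 < volume (E.cylinder w) := by
  obtain ⟨x, hx, y, hy, hxy⟩ := (E.cylinder_infinite w).nontrivial
  calc (0 : ℝ≥0∞) < ENNReal.ofReal |y - x| := ENNReal.ofReal_pos.2 (abs_sub_pos.2 hxy.symm)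
    _ = volume (uIcc x y) := Real.volume_interval.symm
    _ ≤ volume (E.cylinder w) := measure_mono ((E.ordConnected_cylinder w).uIcc_subset hx hy)

lemma volume_cylinder_ne_top (w : List (Fin E.g)) : volume (E.cylinder w) ≠ ⊤ :=
  ne_top_of_le_ne_top (by simp) (measure_mono (E.cylinder_subset_Ico w))

lemma ofReal_mul_volume_cylinder_rpow_ne_zero {K : ℝ} (hK : 0 < K) (s : ℝ)
    (w : List (Fin E.g)) : (ENNReal.ofReal K * volume (E.cylinder w)) ^ s ≠ 0 :=
  (ENNReal.rpow_pos (ENNReal.mul_pos (ENNReal.ofReal_pos.2 hK).ne' (E.volume_cylinder_pos w).ne')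
    (ENNReal.mul_ne_top ENNReal.ofReal_ne_top (E.volume_cylinder_ne_top w))).ne'

lemma ofReal_mul_volume_cylinder_rpow_ne_top (K : ℝ) {s : ℝ} (hs : 0 ≤ s)
    (w : List (Fin E.g)) : (ENNReal.ofReal K * volume (E.cylinder w)) ^ s ≠ ⊤ :=
  ENNReal.rpow_ne_top_of_nonneg hs (ENNReal.mul_ne_top ENNReal.ofReal_ne_top
    (E.volume_cylinder_ne_top w))

lemma cylMeasure_le_tsum {s : ℝ} {A : Set ℝ} (cov : ℕ → List (Fin E.g))
    (hA : A ⊆ ⋃ i, E.cylinder (cov i)) :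
    E.cylMeasure s A ≤ ∑' i, volume (E.cylinder (cov i)) ^ s :=
  iInf₂_le cov hA

lemma cylMeasure_mono {s : ℝ} {A B : Set ℝ} (hAB : A ⊆ B) :
    E.cylMeasure s A ≤ E.cylMeasure s B :=
  iInf_mono fun _ => iInf_mono' fun hB => ⟨hAB.trans hB, le_rfl⟩

lemma cylMeasure_cylinder_inter_preimage_le {K s : ℝ} (hK : 0 < K)
    (hbd : E.HasBoundedDistortion K) (hs : 0 ≤ s) (w : List (Fin E.g)) (A : Set ℝ) :
    E.cylMeasure s (E.cylinder w ∩ E.f^[w.length] ⁻¹' A) ≤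
      (ENNReal.ofReal K * volume (E.cylinder w)) ^ s * E.cylMeasure s A := by
  set a := (ENNReal.ofReal K * volume (E.cylinder w)) ^ s
  have ha0 : a ≠ 0 := E.ofReal_mul_volume_cylinder_rpow_ne_zero hK s w
  have ha : a ≠ ⊤ := E.ofReal_mul_volume_cylinder_rpow_ne_top K hs w
  rw [cylMeasure.eq_1 E s A, ENNReal.mul_iInf_of_ne ha0 ha]
  refine le_iInf fun cov => ?_
  rw [ENNReal.mul_iInf_of_ne ha0 ha]
  refine le_iInf fun hA => ?_
  have hcover : E.cylinder w ∩ E.f^[w.length] ⁻¹' A ⊆ ⋃ i, E.cylinder (w ++ cov i) := by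
    rintro x ⟨hx, hxA⟩
    obtain ⟨i, hi⟩ := mem_iUnion.1 (hA hxA)
    exact mem_iUnion.2 ⟨i, E.cylinder_append w (cov i) ▸ ⟨hx, hi⟩⟩
  calc E.cylMeasure s (E.cylinder w ∩ E.f^[w.length] ⁻¹' A)
      ≤ ∑' i, volume (E.cylinder (w ++ cov i)) ^ s := E.cylMeasure_le_tsum _ hcover
    _ ≤ ∑' i, a * volume (E.cylinder (cov i)) ^ s := ENNReal.tsum_le_tsum fun i =>
        (ENNReal.rpow_le_rpow ((hbd w (cov i)).1.trans_eq (mul_assoc _ _ _).symm) hs).trans_eq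
          (ENNReal.mul_rpow_of_nonneg _ _ hs)
    _ = a * ∑' i, volume (E.cylinder (cov i)) ^ s := ENNReal.tsum_mul_left

def OccursAt {m : ℕ} (w : Fin m → Fin E.g) (x : ℝ) (i : ℕ) : Prop :=
  ∀ k : Fin m, E.f^[i + k] x ∈ E.branch (w k)

lemma freq_eq_count {m : ℕ} (w : Fin m → Fin E.g) (x : ℝ) (N : ℕ) :
    E.freq w x N = Nat.count (E.OccursAt w x) (N - m) / (N - m : ℕ) := by
  simp only [freq, OccursAt, Nat.count_eq_card_filter_range]
  congr

lemma occursAt_iterate {m : ℕ} (w : Fin m → Fin E.g) (x : ℝ) (n : ℕ) :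
    E.OccursAt w (E.f^[n] x) = fun i => E.OccursAt w x (n + i) := by
  ext i
  simp only [OccursAt, ← Function.iterate_add_apply, add_comm n i, add_right_comm _ n]

lemma abs_freq_iterate_sub_freq_le {m : ℕ} (w : Fin m → Fin E.g) (x : ℝ) (n N : ℕ) :
    |E.freq w (E.f^[n] x) N - E.freq w x N| ≤ n / (N - m : ℕ) := by
  rw [freq_eq_count, freq_eq_count, occursAt_iterate, ← sub_div, abs_div, Nat.abs_cast]
  refine div_le_div_of_nonneg_right ?_ (Nat.cast_nonneg _)
  convert Nat.abs_count_add_sub_count_le (E.OccursAt w x) n (N - m)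

lemma iterate_mem_GsetApprox {m : ℕ} {p : (Fin m → Fin E.g) → ℝ} {x δ η : ℝ} {n N : ℕ}
    (hx : x ∈ E.GsetApprox m p N δ) (hfx : E.f^[n] x ∈ Ico 0 1)
    (hn : (n : ℝ) / (N - m : ℕ) ≤ η) : E.f^[n] x ∈ E.GsetApprox m p N (δ + η) := by
  refine ⟨hfx, fun v => ?_⟩
  calc |E.freq v (E.f^[n] x) N - p v|
      ≤ |E.freq v (E.f^[n] x) N - E.freq v x N| + |E.freq v x N - p v| := abs_sub_le _ _ _
    _ < δ + η := by linarith [E.abs_freq_iterate_sub_freq_le v x n N, hx.2 v]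

lemma cylinder_inter_GsetApprox_subset {m : ℕ} {p : (Fin m → Fin E.g) → ℝ} {δ η : ℝ}
    {N : ℕ} {w : List (Fin E.g)} (hN : (w.length : ℝ) / (N - m : ℕ) ≤ η) :
    E.cylinder w ∩ E.GsetApprox m p N δ ⊆
      E.cylinder w ∩ E.f^[w.length] ⁻¹' (Ico 0 1 ∩ E.GsetApprox m p N (δ + η)) := by
  rintro x ⟨hx, hxG⟩
  have hfx := E.mapsTo_iterate_length_cylinder w hx
  exact ⟨hx, hfx, E.iterate_mem_GsetApprox hxG hfx hN⟩

end ExpandingFullShift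

open ExpandingFullShift in
theorem cylMeasure_subsequence_cylinder_general (E : ExpandingFullShift) (K : ℝ) (hK : 1 ≤ K)
    (hbd : E.HasBoundedDistortion K)
    (m : ℕ) (p : (Fin m → Fin E.g) → ℝ)
    (ε : ℝ) (hε : 0 < ε) (s : ℝ) (hs0 : 0 < s)
    (M : ℕ → ℕ) (hM : StrictMono M) (c : ℝ)
    (h : ∀ k, E.cylMeasure s (Ico (0:ℝ) 1 ∩ E.GsetApprox m p (M k) ε)
      < ENNReal.ofReal (c / K ^ s)) :
    ∀ w : List (Fin E.g), ∃ KC : ℕ, ∀ k > KC,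
      E.cylMeasure s (E.cylinder w ∩ E.GsetApprox m p (M k) (ε / 2))
        < ENNReal.ofReal c * volume (E.cylinder w) ^ s := by
  intro w
  have hK0 : 0 < K := one_pos.trans_le hK
  have hshift : ∀ᶠ k in atTop, (w.length : ℝ) / (M k - m : ℕ) ≤ ε / 2 :=
    (((tendsto_const_div_atTop_nhds_zero_nat _).comp (tendsto_sub_atTop_nat m)).comp
      hM.tendsto_atTop).eventually (ge_mem_nhds (half_pos hε))
  obtain ⟨KC, hKC⟩ := eventually_atTop.1 hshift
  refine ⟨KC, fun k hk => ?_⟩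
  have hsub : E.cylinder w ∩ E.GsetApprox m p (M k) (ε / 2) ⊆
      E.cylinder w ∩ E.f^[w.length] ⁻¹' (Ico 0 1 ∩ E.GsetApprox m p (M k) ε) := by
    simpa only [add_halves] using E.cylinder_inter_GsetApprox_subset (δ := ε / 2) (hKC k hk.le)
  calc _ ≤ _ := E.cylMeasure_mono hsub
    _ ≤ _ := E.cylMeasure_cylinder_inter_preimage_le hK0 hbd hs0.le w _
    _ < (ENNReal.ofReal K * volume (E.cylinder w)) ^ s * ENNReal.ofReal (c / K ^ s) :=
        ENNReal.mul_lt_mul_right (E.ofReal_mul_volume_cylinder_rpow_ne_zero hK0 s w)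
          (E.ofReal_mul_volume_cylinder_rpow_ne_top K hs0.le w) (h k)
    _ = ENNReal.ofReal c * volume (E.cylinder w) ^ s := by
      rw [ENNReal.mul_rpow_of_nonneg _ _ hs0.le, ENNReal.ofReal_rpow_of_pos hK0, mul_right_comm,
        ← ENNReal.ofReal_mul (Real.rpow_nonneg hK0.le s),
        mul_div_cancel₀ c (Real.rpow_pos_of_pos hK0 s).ne']

open ExpandingFullShift in
/-- if `N^s_∞([0,1) ∩ G^{f,m}_{p̄}(M_k,ε)) < c/K^s` along a subsequence,
then for each cylinder `C` there is `K_C` with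
`N^s_∞(C ∩ G^{f,m}_{p̄}(M_k, ε/2)) < c|C|^s` for all `k > K_C`. -/
theorem cylMeasure_subsequence_cylinder (E : ExpandingFullShift) (K : ℝ) (hK : 1 ≤ K)
    (hbd : E.HasBoundedDistortion K)
    (m : ℕ) (hm : 0 < m) (p : (Fin m → Fin E.g) → ℝ) (hp : IsProbVector p)
    (ε : ℝ) (hε : 0 < ε) (s : ℝ) (hs0 : 0 < s) (hs1 : s ≤ 1)
    (M : ℕ → ℕ) (hM : StrictMono M) (c : ℝ) (hc0 : 0 ≤ c) (hc1 : c < 1)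
    (h : ∀ k, E.cylMeasure s (Ico (0:ℝ) 1 ∩ E.GsetApprox m p (M k) ε)
      < ENNReal.ofReal (c / K ^ s)) :
    ∀ w : List (Fin E.g), ∃ KC : ℕ, ∀ k > KC,
      E.cylMeasure s (E.cylinder w ∩ E.GsetApprox m p (M k) (ε / 2))
        < ENNReal.ofReal c * volume (E.cylinder w) ^ s :=
  cylMeasure_subsequence_cylinder_general E K hK hbd m p ε hε s hs0 M hM c h
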